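/- arXiv:1704.06298 — 5 statements merged into one kernel-verified Lean document; each statement's English description precedes it below -/
import Mathlib

section
/- For all real α > 0, β₁ > 0, β₂ > 0 and every x₀ ∈ ℝ, the two-dimensional Gaussian integral satisfies ∫_ℝ ∫_ℝ exp(−αx₁² − αx₂² − β₁(x₁ − x₀)² − β₂(x₂ − x₁)²) dx₂ dx₁ = π·D^{-1/2}·exp(−αβ₁(α + 2β₂)x₀²/D), where D = (α + β₁)(α + β₂) + αβ₂. -/
open MeasureTheory Real

/-!
Completing the square turns every one-dimensional integral of the exponential of a concave
quadratic into a translated Gaussian integral. Integrating out `x₂` this way leaves a Gaussian in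
`x₁` with precision `D / (α + β₂)`, and a second application of the same formula gives the result,
the two factors `√(π / (α + β₂))` and `√(π (α + β₂) / D)` combining to `π / √D`.
-/

theorem integral_exp_neg_mul_sq_add_mul_add {b : ℝ} (hb : 0 < b) (c d : ℝ) :
    ∫ x : ℝ, exp (-b * x ^ 2 + c * x + d) = √(π / b) * exp (c ^ 2 / (4 * b) + d) := by
  have complete_square : ∀ x : ℝ,
      -b * x ^ 2 + c * x + d = -b * (x - c / (2 * b)) ^ 2 + (c ^ 2 / (4 * b) + d) := by
    intro x
    field_simp
    ring
  simp_rw [complete_square, exp_add, integral_mul_const,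
    integral_sub_right_eq_self (fun x => exp (-b * x ^ 2)), integral_gaussian]

theorem sqrt_div_mul_sqrt_div_div {x p D : ℝ} (hx : 0 ≤ x) (hp : 0 < p) (hD : 0 < D) :
    √(x / p) * √(x / (D / p)) = x * D ^ (-(1 : ℝ) / 2) := by
  have hprod : x / p * (x / (D / p)) = x ^ 2 / D := by
    field_simp
  rw [← sqrt_mul (by positivity), hprod, sqrt_div' _ hD.le, sqrt_sq hx, div_eq_mul_inv,
    neg_div, rpow_neg hD.le, ← sqrt_eq_rpow]

/-- Per-coordinate two-dimensional Gaussian integral underlying Theorem 2: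
`∫_ℝ ∫_ℝ exp(−αx₁² − αx₂² − β₁(x₁−x₀)² − β₂(x₂−x₁)²) dx₂ dx₁
  = π D^{-1/2} exp(−αβ₁(α+2β₂)x₀²/D)` where `D = (α+β₁)(α+β₂) + αβ₂`. -/
theorem two_dim_gaussian_integral (α β₁ β₂ x₀ : ℝ)
    (hα : 0 < α) (hβ₁ : 0 < β₁) (hβ₂ : 0 < β₂)
    (D : ℝ) (hD : D = (α + β₁) * (α + β₂) + α * β₂) :
    (∫ x₁ : ℝ, ∫ x₂ : ℝ,
        Real.exp (-α * x₁ ^ 2 - α * x₂ ^ 2 - β₁ * (x₁ - x₀) ^ 2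
          - β₂ * (x₂ - x₁) ^ 2))
      = π * D ^ (-(1 : ℝ) / 2) *
        Real.exp (-α * β₁ * (α + 2 * β₂) * x₀ ^ 2 / D) := by
  have hp : 0 < α + β₂ := add_pos hα hβ₂
  have hDpos : 0 < D := by
    rw [hD]
    positivity
  have inner : ∀ x₁ : ℝ,
      ∫ x₂ : ℝ, exp (-α * x₁ ^ 2 - α * x₂ ^ 2 - β₁ * (x₁ - x₀) ^ 2 - β₂ * (x₂ - x₁) ^ 2)
        = √(π / (α + β₂)) *
          exp (-(D / (α + β₂)) * x₁ ^ 2 + 2 * β₁ * x₀ * x₁ + -β₁ * x₀ ^ 2) := by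
    intro x₁
    calc _ = ∫ x₂ : ℝ, exp (-(α + β₂) * x₂ ^ 2 + 2 * β₂ * x₁ * x₂
              + (-(α + β₂) * x₁ ^ 2 - β₁ * (x₁ - x₀) ^ 2)) := by
          congr 1 with x₂
          congr 1
          ring
      _ = _ := by
          rw [integral_exp_neg_mul_sq_add_mul_add hp]
          congr 2
          rw [hD]
          field_simp
          ring
  rw [integral_congr_ae (.of_forall inner), integral_const_mul,
    integral_exp_neg_mul_sq_add_mul_add (div_pos hDpos hp), ← mul_assoc,
    sqrt_div_mul_sqrt_div_div pi_pos.le hp hDpos]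
  congr 2
  rw [hD]
  field_simp
  ring
end

section
/- For all real α > 0, β₁ > 0, β₂ > 0 and every vector r₀ ∈ ℝ³, the Lebesgue integral over ℝ³ × ℝ³ satisfies ∫_{ℝ³} ∫_{ℝ³} exp(−α‖r₁‖² − α‖r₂‖² − β₁‖r₁ − r₀‖² − β₂‖r₂ − r₁‖²) dr₂ dr₁ = π³·D^{-3/2}·exp(−αβ₁(α + 2β₂)‖r₀‖²/D), where D = (α + β₁)(α + β₂) + αβ₂. -/
/-!
Completing the square, `a‖x‖² + b‖x - v‖² = (a + b)‖x - b/(a + b) • v‖² + ab/(a + b) ‖v‖²`,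
turns the inner integral over `r₂` into a translated Gaussian and leaves a factor
`exp(-αβ₂/(α + β₂) ‖r₁‖²)`; the outer integral over `r₁` is then of the same shape, and the
product of the two completed-square coefficients is `D`.
-/

open MeasureTheory Real

section Gaussian

variable {V : Type*} [NormedAddCommGroup V] [InnerProductSpace ℝ V]

theorem mul_norm_sq_add_mul_norm_sub_sq {a b : ℝ} (hab : a + b ≠ 0) (x v : V) :
    a * ‖x‖ ^ 2 + b * ‖x - v‖ ^ 2
      = (a + b) * ‖x - (b / (a + b)) • v‖ ^ 2 + a * b / (a + b) * ‖v‖ ^ 2 := by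
  rw [norm_sub_sq_real, norm_sub_sq_real, real_inner_smul_right, norm_smul,
    Real.norm_eq_abs, mul_pow, sq_abs]
  field_simp
  ring

variable [FiniteDimensional ℝ V] [MeasurableSpace V] [BorelSpace V]

theorem integral_exp_neg_mul_norm_sub_sq {b : ℝ} (hb : 0 < b) (v : V) :
    ∫ x : V, rexp (-b * ‖x - v‖ ^ 2) = (π / b) ^ (Module.finrank ℝ V / 2 : ℝ) :=
  (integral_sub_right_eq_self (fun x : V ↦ rexp (-b * ‖x‖ ^ 2)) v).trans
    (GaussianFourier.integral_rexp_neg_mul_sq_norm hb)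

theorem integral_exp_neg_mul_norm_sq_add_mul_norm_sub_sq {a b : ℝ} (hab : 0 < a + b) (v : V) :
    ∫ x : V, rexp (-(a * ‖x‖ ^ 2 + b * ‖x - v‖ ^ 2))
      = (π / (a + b)) ^ (Module.finrank ℝ V / 2 : ℝ) * rexp (-(a * b / (a + b)) * ‖v‖ ^ 2) := by
  simp_rw [mul_norm_sq_add_mul_norm_sub_sq hab.ne', neg_add, exp_add, ← neg_mul,
    integral_mul_const, integral_exp_neg_mul_norm_sub_sq hab]

theorem integral_integral_exp_neg_chain {a b c d : ℝ} (hcd : 0 < c + d)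
    (habcd : 0 < a + c * d / (c + d) + b) (v : V) :
    ∫ x : V, ∫ y : V, rexp (-(a * ‖x‖ ^ 2 + b * ‖x - v‖ ^ 2) - (c * ‖y‖ ^ 2 + d * ‖y - x‖ ^ 2))
      = (π / (c + d)) ^ (Module.finrank ℝ V / 2 : ℝ)
        * (π / (a + c * d / (c + d) + b)) ^ (Module.finrank ℝ V / 2 : ℝ)
        * rexp (-((a + c * d / (c + d)) * b / (a + c * d / (c + d) + b)) * ‖v‖ ^ 2) := by
  have hinner : ∀ x : V,
      ∫ y : V, rexp (-(a * ‖x‖ ^ 2 + b * ‖x - v‖ ^ 2) - (c * ‖y‖ ^ 2 + d * ‖y - x‖ ^ 2))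
        = (π / (c + d)) ^ (Module.finrank ℝ V / 2 : ℝ)
          * rexp (-((a + c * d / (c + d)) * ‖x‖ ^ 2 + b * ‖x - v‖ ^ 2)) := by
    intro x
    simp_rw [sub_eq_add_neg (-(a * ‖x‖ ^ 2 + b * ‖x - v‖ ^ 2)), exp_add, integral_const_mul,
      integral_exp_neg_mul_norm_sq_add_mul_norm_sub_sq hcd, mul_left_comm (rexp _), ← exp_add]
    ring_nf
  simp_rw [hinner, integral_const_mul, integral_exp_neg_mul_norm_sq_add_mul_norm_sub_sq habcd,
    mul_assoc]

end Gaussian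

/-- The six-dimensional Gaussian integral of Theorem 2:
`∫_{ℝ³} ∫_{ℝ³} exp(−α‖r₁‖² − α‖r₂‖² − β₁‖r₁−r₀‖² − β₂‖r₂−r₁‖²) dr₂ dr₁
  = π³ D^{-3/2} exp(−αβ₁(α+2β₂)‖r₀‖²/D)` where `D = (α+β₁)(α+β₂) + αβ₂`. -/
theorem six_dim_gaussian_integral (α β₁ β₂ : ℝ)
    (hα : 0 < α) (hβ₁ : 0 < β₁) (hβ₂ : 0 < β₂)
    (r₀ : EuclideanSpace ℝ (Fin 3))
    (D : ℝ) (hD : D = (α + β₁) * (α + β₂) + α * β₂) :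
    (∫ r₁ : EuclideanSpace ℝ (Fin 3), ∫ r₂ : EuclideanSpace ℝ (Fin 3),
        Real.exp (-α * ‖r₁‖ ^ 2 - α * ‖r₂‖ ^ 2 - β₁ * ‖r₁ - r₀‖ ^ 2
          - β₂ * ‖r₂ - r₁‖ ^ 2))
      = π ^ 3 * D ^ (-(3 : ℝ) / 2) *
        Real.exp (-α * β₁ * (α + 2 * β₂) * ‖r₀‖ ^ 2 / D) := by
  have hs : 0 < α + β₂ := by positivity
  have ha : 0 < α + α * β₂ / (α + β₂) + β₁ := by positivity
  have hDpos : 0 < D := by rw [hD]; positivity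
  have hsa : (α + β₂) * (α + α * β₂ / (α + β₂) + β₁) = D := by rw [hD]; field_simp; ring
  have hpow : (π / (α + β₂)) ^ ((3 : ℝ) / 2) * (π / (α + α * β₂ / (α + β₂) + β₁)) ^ ((3 : ℝ) / 2)
      = π ^ 3 * D ^ (-(3 : ℝ) / 2) := by
    rw [← mul_rpow (by positivity) (by positivity), div_mul_div_comm, hsa,
      div_rpow (by positivity) hDpos.le, div_eq_mul_inv, ← rpow_neg hDpos.le, ← sq,
      ← rpow_natCast, ← rpow_mul pi_pos.le]
    norm_num
  have hcoef : (α + α * β₂ / (α + β₂)) * β₁ / (α + α * β₂ / (α + β₂) + β₁)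
      = α * β₁ * (α + 2 * β₂) / D := by
    rw [← hsa]; field_simp; ring
  have hexponent : ∀ r₁ r₂ : EuclideanSpace ℝ (Fin 3),
      -α * ‖r₁‖ ^ 2 - α * ‖r₂‖ ^ 2 - β₁ * ‖r₁ - r₀‖ ^ 2 - β₂ * ‖r₂ - r₁‖ ^ 2
        = -(α * ‖r₁‖ ^ 2 + β₁ * ‖r₁ - r₀‖ ^ 2) - (α * ‖r₂‖ ^ 2 + β₂ * ‖r₂ - r₁‖ ^ 2) := by
    intros; ring
  simp_rw [hexponent, integral_integral_exp_neg_chain hs ha, finrank_euclideanSpace_fin,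
    Nat.cast_ofNat, hpow, hcoef]
  ring_nf
end

section
/- (Theorem 2: ACF of the time-variant MC channel.) For all V > 0, D₁ > 0, D₂ > 0, τ > 0, times 0 < t₁ < t₂, and every r₀ ∈ ℝ³ with ‖r₀‖ = x₀, the autocorrelation function φ(t₁,t₂) = ∫_{ℝ³}∫_{ℝ³} h(r₁)·h(r₂)·g_{t₁}(r₁ − r₀)·g_{t₂−t₁}(r₂ − r₁) dr₂ dr₁ equals V²·(4π)^{-3}·E^{-3/2}·exp(−x₀²(2a + s₂)/(4E)), where a = D₁τ, s₁ = D₂t₁, s₂ = D₂(t₂ − t₁), and E = a² + 2a s₁ + a s₂ + s₁ s₂. -/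
/-!
With the heat kernel `G_s(x) = (4πs)^(-d/2) exp(-‖x‖²/(4s))` we have `h = V G_{D₁τ}` and
`g_t = G_{D₂t}`. Completing the square gives
`G_a(y) G_b(y - x) = G_{a+b}(x) G_{ab/(a+b)}(y - a/(a+b) x)`, and since each heat kernel has
total mass one, integrating in `y` yields the semigroup law `∫ G_a(y) G_b(y - x) dy = G_{a+b}(x)`;
at `x = 0` the same identity shows that `G_a G_b` is a multiple of a heat kernel. Integrating out
`r₂` turns `h(r₂) g(r₂ - r₁)` into `V G_{a+s₂}(r₁)`, the product with `h(r₁)` is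
`V G_{2a+s₂}(0) G_{a(a+s₂)/(2a+s₂)}(r₁)`, and integrating out `r₁` leaves
`V² G_{2a+s₂}(0) G_{E/(2a+s₂)}(r₀)`.
-/

open MeasureTheory Real Module

section HeatKernel

variable {F : Type*} [NormedAddCommGroup F] [InnerProductSpace ℝ F]

variable (F) in
noncomputable def heatKernel (s : ℝ) (x : F) : ℝ :=
  (4 * π * s) ^ (-(finrank ℝ F : ℝ) / 2) * exp (-‖x‖ ^ 2 / (4 * s))

lemma heatKernel_euclideanSpace {n : ℕ} (s : ℝ) (x : EuclideanSpace ℝ (Fin n)) :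
    heatKernel _ s x = (4 * π * s) ^ (-(n : ℝ) / 2) * exp (-‖x‖ ^ 2 / (4 * s)) := by
  rw [heatKernel, finrank_euclideanSpace_fin]

lemma heatKernel_mul_heatKernel_sub {a b : ℝ} (ha : 0 < a) (hb : 0 < b) (x y : F) :
    heatKernel F a y * heatKernel F b (y - x) =
      heatKernel F (a + b) x * heatKernel F (a * b / (a + b)) (y - (a / (a + b)) • x) := by
  have hab : 0 < a + b := add_pos ha hb
  have hprefactor :
      (4 * π * a) * (4 * π * b) = (4 * π * (a + b)) * (4 * π * (a * b / (a + b))) := by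
    field_simp
  have hexponent : -‖y‖ ^ 2 / (4 * a) + -‖y - x‖ ^ 2 / (4 * b) =
      -‖x‖ ^ 2 / (4 * (a + b)) + -‖y - (a / (a + b)) • x‖ ^ 2 / (4 * (a * b / (a + b))) := by
    rw [norm_sub_sq_real y x, norm_sub_sq_real, real_inner_smul_right, norm_smul,
      Real.norm_eq_abs, mul_pow, sq_abs]
    field_simp
    ring
  simp only [heatKernel]
  rw [mul_mul_mul_comm, ← mul_rpow (by positivity) (by positivity), ← exp_add, hprefactor,
    hexponent, mul_rpow (by positivity) (by positivity), exp_add]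
  ring

lemma heatKernel_zero_mul_heatKernel_div {p q : ℝ} (hp : 0 < p) (hq : 0 < q) (x : F) :
    heatKernel F p 0 * heatKernel F (q / p) x =
      (4 * π) ^ (-(finrank ℝ F : ℝ)) * q ^ (-(finrank ℝ F : ℝ) / 2) *
        exp (-‖x‖ ^ 2 * p / (4 * q)) := by
  have hprefactor : 4 * π * p * (4 * π * (q / p)) = (4 * π) ^ (2 : ℝ) * q := by
    field_simp
    norm_cast
    ring
  simp only [heatKernel, norm_zero, ne_eq, OfNat.ofNat_ne_zero, not_false_eq_true, zero_pow,
    neg_zero, zero_div, exp_zero, mul_one]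
  rw [← mul_assoc, ← mul_rpow (by positivity) (by positivity), hprefactor,
    mul_rpow (by positivity) hq.le, ← rpow_mul (by positivity),
    show (2 : ℝ) * (-(finrank ℝ F : ℝ) / 2) = -(finrank ℝ F : ℝ) by ring,
    show -‖x‖ ^ 2 / (4 * (q / p)) = -‖x‖ ^ 2 * p / (4 * q) by field_simp]

variable [FiniteDimensional ℝ F] [MeasurableSpace F] [BorelSpace F]

lemma integral_heatKernel {s : ℝ} (hs : 0 < s) : ∫ x : F, heatKernel F s x = 1 := by
  have hgauss := GaussianFourier.integral_rexp_neg_mul_sq_norm (V := F)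
    (inv_pos.2 (by positivity : 0 < 4 * s))
  simp only [heatKernel, integral_const_mul]
  simp_rw [show ∀ x : F, -‖x‖ ^ 2 / (4 * s) = -(4 * s)⁻¹ * ‖x‖ ^ 2 from fun x => by ring]
  rw [hgauss, div_inv_eq_mul, neg_div, rpow_neg (by positivity),
    show π * (4 * s) = 4 * π * s by ring, inv_mul_cancel₀ (by positivity)]

lemma integral_heatKernel_mul_heatKernel_sub {a b : ℝ} (ha : 0 < a) (hb : 0 < b) (x : F) :
    ∫ y, heatKernel F a y * heatKernel F b (y - x) = heatKernel F (a + b) x := by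
  simp_rw [heatKernel_mul_heatKernel_sub ha hb x]
  rw [integral_const_mul, integral_sub_right_eq_self (heatKernel F (a * b / (a + b))),
    integral_heatKernel (by positivity), mul_one]

lemma integral_integral_heatKernel_autocorrelation (V : ℝ) {a s₁ s₂ : ℝ}
    (ha : 0 < a) (hs₁ : 0 < s₁) (hs₂ : 0 < s₂) (r₀ : F) :
    ∫ r₁ : F, ∫ r₂ : F, V * heatKernel F a r₁ * (V * heatKernel F a r₂) *
        heatKernel F s₁ (r₁ - r₀) * heatKernel F s₂ (r₂ - r₁)
      = V ^ 2 * heatKernel F (2 * a + s₂) 0 *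
          heatKernel F (a * (a + s₂) / (2 * a + s₂) + s₁) r₀ := by
  have hinner : ∀ r₁ : F, ∫ r₂ : F, V * heatKernel F a r₁ * (V * heatKernel F a r₂) *
        heatKernel F s₁ (r₁ - r₀) * heatKernel F s₂ (r₂ - r₁)
      = V ^ 2 * heatKernel F s₁ (r₁ - r₀) * (heatKernel F a r₁ * heatKernel F (a + s₂) r₁) := by
    intro r₁
    rw [← integral_heatKernel_mul_heatKernel_sub ha hs₂, ← mul_assoc, ← integral_const_mul]
    congr 1 with r₂
    ring
  have hproduct : ∀ r₁ : F, heatKernel F a r₁ * heatKernel F (a + s₂) r₁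
      = heatKernel F (2 * a + s₂) 0 * heatKernel F (a * (a + s₂) / (2 * a + s₂)) r₁ := by
    intro r₁
    simpa [two_mul, add_assoc] using heatKernel_mul_heatKernel_sub ha (add_pos ha hs₂) 0 r₁
  simp_rw [hinner, hproduct]
  rw [← integral_heatKernel_mul_heatKernel_sub (by positivity) hs₁, ← integral_const_mul]
  congr 1 with r₁
  ring

end HeatKernel

theorem acf_of_time_variant_MC_channel_general (V D₁ D₂ τ t₁ t₂ x₀ : ℝ)
    (hD₁ : 0 < D₁) (hD₂ : 0 < D₂) (hτ : 0 < τ)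
    (ht₁ : 0 < t₁) (ht₁₂ : t₁ < t₂)
    (r₀ : EuclideanSpace ℝ (Fin 3)) (hr₀ : ‖r₀‖ = x₀)
    (a s₁ s₂ E : ℝ)
    (ha : a = D₁ * τ) (hs₁ : s₁ = D₂ * t₁) (hs₂ : s₂ = D₂ * (t₂ - t₁))
    (hE : E = a ^ 2 + 2 * a * s₁ + a * s₂ + s₁ * s₂) :
    (∫ r₁ : EuclideanSpace ℝ (Fin 3), ∫ r₂ : EuclideanSpace ℝ (Fin 3),
        (V * (4 * π * D₁ * τ) ^ (-(3 : ℝ) / 2) *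
            Real.exp (-‖r₁‖ ^ 2 / (4 * D₁ * τ))) *
        (V * (4 * π * D₁ * τ) ^ (-(3 : ℝ) / 2) *
            Real.exp (-‖r₂‖ ^ 2 / (4 * D₁ * τ))) *
        ((4 * π * D₂ * t₁) ^ (-(3 : ℝ) / 2) *
            Real.exp (-‖r₁ - r₀‖ ^ 2 / (4 * D₂ * t₁))) *
        ((4 * π * D₂ * (t₂ - t₁)) ^ (-(3 : ℝ) / 2) *
            Real.exp (-‖r₂ - r₁‖ ^ 2 / (4 * D₂ * (t₂ - t₁)))))
      = V ^ 2 * (4 * π) ^ (-(3 : ℝ)) * E ^ (-(3 : ℝ) / 2) *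
          Real.exp (-x₀ ^ 2 * (2 * a + s₂) / (4 * E)) := by
  have ha₀ : 0 < a := ha ▸ mul_pos hD₁ hτ
  have hs₁₀ : 0 < s₁ := hs₁ ▸ mul_pos hD₂ ht₁
  have hs₂₀ : 0 < s₂ := hs₂ ▸ mul_pos hD₂ (sub_pos.2 ht₁₂)
  have hE₀ : 0 < E := by rw [hE]; positivity
  have htime : a * (a + s₂) / (2 * a + s₂) + s₁ = E / (2 * a + s₂) := by
    rw [hE]; field_simp; ring
  calc _ = ∫ r₁ : EuclideanSpace ℝ (Fin 3), ∫ r₂ : EuclideanSpace ℝ (Fin 3),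
        V * heatKernel _ a r₁ * (V * heatKernel _ a r₂) *
          heatKernel _ s₁ (r₁ - r₀) * heatKernel _ s₂ (r₂ - r₁) := by
        simp only [heatKernel_euclideanSpace, Nat.cast_ofNat, ha, hs₁, hs₂, mul_assoc]
    _ = V ^ 2 * (heatKernel _ (2 * a + s₂) (0 : EuclideanSpace ℝ (Fin 3)) *
          heatKernel _ (E / (2 * a + s₂)) r₀) := by
        rw [integral_integral_heatKernel_autocorrelation V ha₀ hs₁₀ hs₂₀, htime, mul_assoc]
    _ = _ := by
        rw [heatKernel_zero_mul_heatKernel_div (by positivity) hE₀, finrank_euclideanSpace_fin,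
          hr₀, Nat.cast_ofNat, mul_div_right_comm _ (2 * a + s₂), ← mul_assoc, ← mul_assoc]

/-- Theorem 2 (ACF of the time-variant MC channel):
`φ(t₁,t₂) = ∫∫ h(r₁) h(r₂) g_{t₁}(r₁−r₀) g_{t₂−t₁}(r₂−r₁) dr₂ dr₁
  = V² (4π)^{-3} E^{-3/2} exp(−x₀²(2a+s₂)/(4E))`,
where `a = D₁τ`, `s₁ = D₂t₁`, `s₂ = D₂(t₂−t₁)`, `E = a² + 2as₁ + as₂ + s₁s₂`,
`h(r) = V(4πD₁τ)^{-3/2} exp(−‖r‖²/(4D₁τ))` and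
`g_s(u) = (4πD₂s)^{-3/2} exp(−‖u‖²/(4D₂s))`. -/
theorem acf_of_time_variant_MC_channel (V D₁ D₂ τ t₁ t₂ x₀ : ℝ)
    (hV : 0 < V) (hD₁ : 0 < D₁) (hD₂ : 0 < D₂) (hτ : 0 < τ)
    (ht₁ : 0 < t₁) (ht₁₂ : t₁ < t₂)
    (r₀ : EuclideanSpace ℝ (Fin 3)) (hr₀ : ‖r₀‖ = x₀)
    (a s₁ s₂ E : ℝ)
    (ha : a = D₁ * τ) (hs₁ : s₁ = D₂ * t₁) (hs₂ : s₂ = D₂ * (t₂ - t₁))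
    (hE : E = a ^ 2 + 2 * a * s₁ + a * s₂ + s₁ * s₂) :
    (∫ r₁ : EuclideanSpace ℝ (Fin 3), ∫ r₂ : EuclideanSpace ℝ (Fin 3),
        (V * (4 * π * D₁ * τ) ^ (-(3 : ℝ) / 2) *
            Real.exp (-‖r₁‖ ^ 2 / (4 * D₁ * τ))) *
        (V * (4 * π * D₁ * τ) ^ (-(3 : ℝ) / 2) *
            Real.exp (-‖r₂‖ ^ 2 / (4 * D₁ * τ))) *
        ((4 * π * D₂ * t₁) ^ (-(3 : ℝ) / 2) *
            Real.exp (-‖r₁ - r₀‖ ^ 2 / (4 * D₂ * t₁))) *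
        ((4 * π * D₂ * (t₂ - t₁)) ^ (-(3 : ℝ) / 2) *
            Real.exp (-‖r₂ - r₁‖ ^ 2 / (4 * D₂ * (t₂ - t₁)))))
      = V ^ 2 * (4 * π) ^ (-(3 : ℝ)) * E ^ (-(3 : ℝ) / 2) *
          Real.exp (-x₀ ^ 2 * (2 * a + s₂) / (4 * E)) :=
  acf_of_time_variant_MC_channel_general V D₁ D₂ τ t₁ t₂ x₀ hD₁ hD₂ hτ ht₁ ht₁₂ r₀ hr₀ a s₁ s₂ E ha
    hs₁ hs₂ hE
end

section
/- (Cauchy–Schwarz for the closed-form ACF.) For all V > 0, a > 0, s₁ > 0, s₂ > 0 and x₀ ≥ 0, letting E = a² + 2a s₁ + a s₂ + s₁ s₂, the closed-form autocorrelation values satisfy [V²·(4π)^{-3}·E^{-3/2}·exp(−x₀²(2a + s₂)/(4E))]² ≤ [V²·exp(−x₀²/(2(a + 2s₁)))/((4πa)^{3/2}(4π(a + 2s₁))^{3/2})] · [V²·exp(−x₀²/(2(a + 2s₁ + 2s₂)))/((4πa)^{3/2}(4π(a + 2s₁ + 2s₂))^{3/2})]. Equivalently, with a = D₁τ, s₁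 = D₂t₁, s₂ = D₂(t₂ − t₁), one has φ(t₁,t₂)² ≤ φ(t₁,t₁)·φ(t₂,t₂) for 0 < t₁ < t₂, so the normalized ACF ρ(t₁,t₂) = φ(t₁,t₂)/√(φ(t₁,t₁)φ(t₂,t₂)) is at most 1. -/
/-!
Squaring `φ(t₁,t₂)` produces the same shape as the product `φ(t₁,t₁)·φ(t₂,t₂)`: a factor `V⁴`,
a Gaussian factor and a power `(·)^{-3/2}` of a polynomial in `a, s₁, s₂`. Writing
`A = a + 2s₁`, `B = a + 2s₁ + 2s₂`, the comparison reduces to two polynomial inequalities,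
both certified by explicit sums of nonnegative terms:
`E² − a²AB = 2as₁s₂A + s₂²(a+s₁)²` for the prefactors and
`(2a+s₂)AB − (A+B)E = s₂(a² + 2as₁ + 2s₁s₂)` for the exponents.
-/

open Real

section Algebra

variable {a s₁ s₂ E : ℝ}

lemma acf_denominator_le (ha : 0 ≤ a) (hs₁ : 0 ≤ s₁) (hs₂ : 0 ≤ s₂)
    (hE : E = a ^ 2 + 2 * a * s₁ + a * s₂ + s₁ * s₂) :
    a ^ 2 * ((a + 2 * s₁) * (a + 2 * s₁ + 2 * s₂)) ≤ E ^ 2 := by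
  have hgap : E ^ 2 - a ^ 2 * ((a + 2 * s₁) * (a + 2 * s₁ + 2 * s₂))
      = 2 * a * s₁ * s₂ * (a + 2 * s₁) + s₂ ^ 2 * (a + s₁) ^ 2 := by
    rw [hE]; ring
  have : 0 ≤ 2 * a * s₁ * s₂ * (a + 2 * s₁) + s₂ ^ 2 * (a + s₁) ^ 2 := by positivity
  linarith

lemma inv_add_inv_le_acf (ha : 0 < a) (hs₁ : 0 ≤ s₁) (hs₂ : 0 ≤ s₂)
    (hE : E = a ^ 2 + 2 * a * s₁ + a * s₂ + s₁ * s₂) :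
    (a + 2 * s₁)⁻¹ + (a + 2 * s₁ + 2 * s₂)⁻¹ ≤ (2 * a + s₂) / E := by
  have hE₀ : 0 < E := by rw [hE]; positivity
  rw [inv_add_inv (by positivity) (by positivity), div_le_div_iff₀ (by positivity) hE₀]
  have hgap : (2 * a + s₂) * ((a + 2 * s₁) * (a + 2 * s₁ + 2 * s₂))
      - (a + 2 * s₁ + (a + 2 * s₁ + 2 * s₂)) * E = s₂ * (a ^ 2 + 2 * a * s₁ + 2 * s₁ * s₂) := by
    rw [hE]; ring
  have : 0 ≤ s₂ * (a ^ 2 + 2 * a * s₁ + 2 * s₁ * s₂) := by positivity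
  linarith

lemma acf_exponent_le (x₀ : ℝ) (ha : 0 < a) (hs₁ : 0 ≤ s₁) (hs₂ : 0 ≤ s₂)
    (hE : E = a ^ 2 + 2 * a * s₁ + a * s₂ + s₁ * s₂) :
    2 * (-x₀ ^ 2 * (2 * a + s₂) / (4 * E))
      ≤ -x₀ ^ 2 / (2 * (a + 2 * s₁)) + -x₀ ^ 2 / (2 * (a + 2 * s₁ + 2 * s₂)) := by
  have hlhs : 2 * (-x₀ ^ 2 * (2 * a + s₂) / (4 * E)) = -(x₀ ^ 2 / 2) * ((2 * a + s₂) / E) := by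
    ring
  have hrhs : -x₀ ^ 2 / (2 * (a + 2 * s₁)) + -x₀ ^ 2 / (2 * (a + 2 * s₁ + 2 * s₂))
      = -(x₀ ^ 2 / 2) * ((a + 2 * s₁)⁻¹ + (a + 2 * s₁ + 2 * s₂)⁻¹) := by
    simp only [div_eq_mul_inv, mul_inv]
    ring
  rw [hlhs, hrhs]
  exact mul_le_mul_of_nonpos_left (inv_add_inv_le_acf ha hs₁ hs₂ hE)
    (neg_nonpos.mpr (by positivity))

end Algebra

section Rpow

lemma rpow_neg_three_mul_rpow_neg_three_halves {c E : ℝ} (hc : 0 ≤ c) (hE : 0 ≤ E) :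
    c ^ (-(3 : ℝ)) * E ^ (-(3 : ℝ) / 2) = ((c ^ 2 * E) ^ ((3 : ℝ) / 2))⁻¹ := by
  rw [mul_rpow (by positivity) hE, ← rpow_natCast_mul hc, mul_inv, ← rpow_neg hc,
    ← rpow_neg hE]
  norm_num

lemma sq_mul_inv_rpow_mul_exp {Y : ℝ} (hY : 0 ≤ Y) (V r u : ℝ) :
    (V ^ 2 * (Y ^ r)⁻¹ * exp u) ^ 2 = V ^ 4 * exp (2 * u) / (Y ^ 2) ^ r := by
  rw [← rpow_pow_comm hY, two_mul, exp_add]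
  ring

lemma div_mul_div_rpow_eq {X Y Z : ℝ} (hX : 0 ≤ X) (hY : 0 ≤ Y) (hZ : 0 ≤ Z) (V r v w : ℝ) :
    V ^ 2 * exp v / (X ^ r * Y ^ r) * (V ^ 2 * exp w / (X ^ r * Z ^ r))
      = V ^ 4 * exp (v + w) / (X ^ 2 * (Y * Z)) ^ r := by
  rw [mul_rpow (by positivity) (by positivity), mul_rpow hY hZ, ← rpow_pow_comm hX, exp_add]
  ring

end Rpow

theorem acf_cauchy_schwarz_general (V a s₁ s₂ x₀ : ℝ)
    (ha : 0 < a) (hs₁ : 0 < s₁) (hs₂ : 0 < s₂)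
    (E : ℝ) (hE : E = a ^ 2 + 2 * a * s₁ + a * s₂ + s₁ * s₂) :
    (V ^ 2 * (4 * π) ^ (-(3 : ℝ)) * E ^ (-(3 : ℝ) / 2) *
        Real.exp (-x₀ ^ 2 * (2 * a + s₂) / (4 * E))) ^ 2
      ≤ (V ^ 2 * Real.exp (-x₀ ^ 2 / (2 * (a + 2 * s₁))) /
            ((4 * π * a) ^ ((3 : ℝ) / 2) *
              (4 * π * (a + 2 * s₁)) ^ ((3 : ℝ) / 2))) *
        (V ^ 2 * Real.exp (-x₀ ^ 2 / (2 * (a + 2 * s₁ + 2 * s₂))) /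
            ((4 * π * a) ^ ((3 : ℝ) / 2) *
              (4 * π * (a + 2 * s₁ + 2 * s₂)) ^ ((3 : ℝ) / 2))) := by
  have hE₀ : 0 < E := by rw [hE]; positivity
  rw [mul_assoc (V ^ 2), rpow_neg_three_mul_rpow_neg_three_halves (by positivity) hE₀.le,
    sq_mul_inv_rpow_mul_exp (by positivity),
    div_mul_div_rpow_eq (by positivity) (by positivity) (by positivity)]
  gcongr
  · exact acf_exponent_le x₀ ha hs₁.le hs₂.le hE
  · calc (4 * π * a) ^ 2 * (4 * π * (a + 2 * s₁) * (4 * π * (a + 2 * s₁ + 2 * s₂)))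
        = (4 * π) ^ 4 * (a ^ 2 * ((a + 2 * s₁) * (a + 2 * s₁ + 2 * s₂))) := by ring
      _ ≤ (4 * π) ^ 4 * E ^ 2 := by gcongr; exact acf_denominator_le ha.le hs₁.le hs₂.le hE
      _ = ((4 * π) ^ 2 * E) ^ 2 := by ring

/-- Cauchy–Schwarz for the closed-form ACF: with `E = a² + 2as₁ + as₂ + s₁s₂`
(where `a = D₁τ`, `s₁ = D₂t₁`, `s₂ = D₂(t₂−t₁)`),
`φ(t₁,t₂)² ≤ φ(t₁,t₁)·φ(t₂,t₂)`, i.e.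
`(V²(4π)^{-3} E^{-3/2} exp(−x₀²(2a+s₂)/(4E)))²
  ≤ (V² exp(−x₀²/(2(a+2s₁)))/((4πa)^{3/2}(4π(a+2s₁))^{3/2}))
    · (V² exp(−x₀²/(2(a+2s₁+2s₂)))/((4πa)^{3/2}(4π(a+2s₁+2s₂))^{3/2}))`. -/
theorem acf_cauchy_schwarz (V a s₁ s₂ x₀ : ℝ)
    (hV : 0 < V) (ha : 0 < a) (hs₁ : 0 < s₁) (hs₂ : 0 < s₂) (hx₀ : 0 ≤ x₀)
    (E : ℝ) (hE : E = a ^ 2 + 2 * a * s₁ + a * s₂ + s₁ * s₂) :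
    (V ^ 2 * (4 * π) ^ (-(3 : ℝ)) * E ^ (-(3 : ℝ) / 2) *
        Real.exp (-x₀ ^ 2 * (2 * a + s₂) / (4 * E))) ^ 2
      ≤ (V ^ 2 * Real.exp (-x₀ ^ 2 / (2 * (a + 2 * s₁))) /
            ((4 * π * a) ^ ((3 : ℝ) / 2) *
              (4 * π * (a + 2 * s₁)) ^ ((3 : ℝ) / 2))) *
        (V ^ 2 * Real.exp (-x₀ ^ 2 / (2 * (a + 2 * s₁ + 2 * s₂))) /
            ((4 * π * a) ^ ((3 : ℝ) / 2) *
              (4 * π * (a + 2 * s₁ + 2 * s₂)) ^ ((3 : ℝ) / 2))) :=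
  acf_cauchy_schwarz_general V a s₁ s₂ x₀ ha hs₁ hs₂ E hE
end

section
/- (Finiteness of the coherence time.) For all D₁ > 0, D₂ > 0, τ > 0, x₀ ≥ 0 and every threshold η ∈ (0,1), the set {t > 0 : ρ(t) < η} is nonempty, where ρ(t) = (4πD₁τ)^{3/4}·(4π(D₁τ + 2D₂t))^{3/4}·(4π(D₁τ + D₂t))^{-3/2}·exp(−x₀²/(4(D₁τ + D₂t)) + x₀²/(4(D₁τ + 2D₂t))); hence the coherence time T_c = inf{t > 0 : ρ(t) < η} is a well-defined finite nonnegative real number. -/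
open Real

/-!
As `t → ∞` the exponential factor of `ρ` stays at most `1` and
`(D₁τ + 2D₂t)^{3/4} ≤ 2^{3/4} (D₁τ + D₂t)^{3/4}`, so `ρ(t) = O((D₁τ + D₂t)^{-3/4})` tends to `0`.
Hence `ρ` eventually drops below any threshold `η > 0`.
-/

open Filter Topology

noncomputable def normalizedACF (D₁ D₂ τ x₀ t : ℝ) : ℝ :=
  (4 * π * D₁ * τ) ^ ((3 : ℝ) / 4) *
    (4 * π * (D₁ * τ + 2 * D₂ * t)) ^ ((3 : ℝ) / 4) *
    (4 * π * (D₁ * τ + D₂ * t)) ^ (-(3 : ℝ) / 2) *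
    Real.exp (-x₀ ^ 2 / (4 * (D₁ * τ + D₂ * t))
      + x₀ ^ 2 / (4 * (D₁ * τ + 2 * D₂ * t)))

lemma rpow_mul_rpow_le_of_le_mul {u v k p q : ℝ} (hu : 0 < u) (hv : 0 ≤ v) (hvu : v ≤ k * u)
    (hp : 0 ≤ p) : v ^ p * u ^ q ≤ k ^ p * u ^ (p + q) := by
  have hk : 0 ≤ k := nonneg_of_mul_nonneg_left (hv.trans hvu) hu
  calc v ^ p * u ^ q ≤ (k * u) ^ p * u ^ q := by gcongr
    _ = k ^ p * u ^ (p + q) := by rw [mul_rpow hk hu.le, rpow_add hu]; ring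

lemma exp_neg_div_add_div_le_one {c u v : ℝ} (hc : 0 ≤ c) (hu : 0 < u) (huv : u ≤ v) :
    exp (-c / u + c / v) ≤ 1 := by
  rw [exp_le_one_iff, neg_div, neg_add_nonpos_iff]
  exact div_le_div_of_nonneg_left hc hu huv

lemma normalizedACF_le {D₁ D₂ τ x₀ t : ℝ} (hD₁ : 0 < D₁) (hD₂ : 0 < D₂) (hτ : 0 < τ)
    (ht : 0 ≤ t) :
    normalizedACF D₁ D₂ τ x₀ t ≤
      (4 * π * D₁ * τ) ^ ((3 : ℝ) / 4) * 2 ^ ((3 : ℝ) / 4) *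
        (4 * π * (D₁ * τ + D₂ * t)) ^ (-((3 : ℝ) / 4)) := by
  have hexp : exp (-x₀ ^ 2 / (4 * (D₁ * τ + D₂ * t)) + x₀ ^ 2 / (4 * (D₁ * τ + 2 * D₂ * t))) ≤ 1 :=
    exp_neg_div_add_div_le_one (sq_nonneg x₀) (by positivity) (by nlinarith)
  have hpow : (4 * π * (D₁ * τ + 2 * D₂ * t)) ^ ((3 : ℝ) / 4) *
      (4 * π * (D₁ * τ + D₂ * t)) ^ (-(3 : ℝ) / 2) ≤
        2 ^ ((3 : ℝ) / 4) * (4 * π * (D₁ * τ + D₂ * t)) ^ (-((3 : ℝ) / 4)) := by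
    have hv : 4 * π * (D₁ * τ + 2 * D₂ * t) ≤ 2 * (4 * π * (D₁ * τ + D₂ * t)) := by
      nlinarith [mul_pos pi_pos (mul_pos hD₁ hτ)]
    convert rpow_mul_rpow_le_of_le_mul (by positivity) (by positivity) hv
      (by norm_num : (0 : ℝ) ≤ 3 / 4) (q := -(3 : ℝ) / 2) using 3
    norm_num
  unfold normalizedACF
  calc _ = (4 * π * D₁ * τ) ^ ((3 : ℝ) / 4) * ((4 * π * (D₁ * τ + 2 * D₂ * t)) ^ ((3 : ℝ) / 4) *
        (4 * π * (D₁ * τ + D₂ * t)) ^ (-(3 : ℝ) / 2)) * exp (-x₀ ^ 2 / (4 * (D₁ * τ + D₂ * t))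
          + x₀ ^ 2 / (4 * (D₁ * τ + 2 * D₂ * t))) := by ring
    _ ≤ (4 * π * D₁ * τ) ^ ((3 : ℝ) / 4) *
        (2 ^ ((3 : ℝ) / 4) * (4 * π * (D₁ * τ + D₂ * t)) ^ (-((3 : ℝ) / 4))) * 1 := by
      gcongr
    _ = _ := by ring

lemma tendsto_normalizedACF_atTop_zero {D₁ D₂ τ x₀ : ℝ} (hD₁ : 0 < D₁) (hD₂ : 0 < D₂)
    (hτ : 0 < τ) :
    Tendsto (normalizedACF D₁ D₂ τ x₀) atTop (𝓝 0) := by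
  have hu : Tendsto (fun t => 4 * π * (D₁ * τ + D₂ * t)) atTop atTop :=
    (tendsto_atTop_add_const_left _ _ (tendsto_id.const_mul_atTop hD₂)).const_mul_atTop
      (by positivity)
  have hbound := ((tendsto_rpow_neg_atTop (by norm_num : (0 : ℝ) < 3 / 4)).comp hu).const_mul
    ((4 * π * D₁ * τ) ^ ((3 : ℝ) / 4) * 2 ^ ((3 : ℝ) / 4))
  rw [mul_zero] at hbound
  refine tendsto_of_tendsto_of_tendsto_of_le_of_le' tendsto_const_nhds hbound ?_ ?_
  all_goals filter_upwards [eventually_ge_atTop 0] with t ht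
  · unfold normalizedACF; positivity
  · exact normalizedACF_le hD₁ hD₂ hτ ht

theorem coherence_time_finite_general (D₁ D₂ τ x₀ η : ℝ)
    (hD₁ : 0 < D₁) (hD₂ : 0 < D₂) (hτ : 0 < τ)
    (hη₀ : 0 < η)
    (ρ : ℝ → ℝ)
    (hρ : ∀ t, ρ t = (4 * π * D₁ * τ) ^ ((3 : ℝ) / 4) *
        (4 * π * (D₁ * τ + 2 * D₂ * t)) ^ ((3 : ℝ) / 4) *
        (4 * π * (D₁ * τ + D₂ * t)) ^ (-(3 : ℝ) / 2) *
        Real.exp (-x₀ ^ 2 / (4 * (D₁ * τ + D₂ * t))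
          + x₀ ^ 2 / (4 * (D₁ * τ + 2 * D₂ * t)))) :
    {t : ℝ | 0 < t ∧ ρ t < η}.Nonempty ∧
      0 ≤ sInf {t : ℝ | 0 < t ∧ ρ t < η} := by
  have hρ_eq : ρ = normalizedACF D₁ D₂ τ x₀ := funext hρ
  have hsmall : ∀ᶠ t in atTop, 0 < t ∧ ρ t < η := by
    rw [hρ_eq]
    exact (eventually_gt_atTop 0).and
      ((tendsto_normalizedACF_atTop_zero hD₁ hD₂ hτ).eventually (gt_mem_nhds hη₀))
  exact ⟨hsmall.exists, Real.sInf_nonneg fun _ ht => ht.1.le⟩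

/-- Finiteness of the coherence time: for every threshold `η ∈ (0,1)`, the set
`{t > 0 : ρ(t) < η}` is nonempty, where `ρ` is the closed-form normalized ACF at
`t₁ = 0`; hence the coherence time `T_c = inf {t > 0 : ρ(t) < η}` is a
well-defined finite nonnegative real number. -/
theorem coherence_time_finite (D₁ D₂ τ x₀ η : ℝ)
    (hD₁ : 0 < D₁) (hD₂ : 0 < D₂) (hτ : 0 < τ) (hx₀ : 0 ≤ x₀)
    (hη₀ : 0 < η) (hη₁ : η < 1)
    (ρ : ℝ → ℝ)
    (hρ : ∀ t, ρ t = (4 * π * D₁ * τ) ^ ((3 : ℝ) / 4) *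
        (4 * π * (D₁ * τ + 2 * D₂ * t)) ^ ((3 : ℝ) / 4) *
        (4 * π * (D₁ * τ + D₂ * t)) ^ (-(3 : ℝ) / 2) *
        Real.exp (-x₀ ^ 2 / (4 * (D₁ * τ + D₂ * t))
          + x₀ ^ 2 / (4 * (D₁ * τ + 2 * D₂ * t)))) :
    {t : ℝ | 0 < t ∧ ρ t < η}.Nonempty ∧
      0 ≤ sInf {t : ℝ | 0 < t ∧ ρ t < η} :=
  coherence_time_finite_general D₁ D₂ τ x₀ η hD₁ hD₂ hτ hη₀ ρ hρ
end
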